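/- arXiv:2101.09471 — 2 statements merged into one kernel-verified Lean document; each statement's English description precedes it below -/
import Mathlib

section
/- With the recursively constructed points a_{n₁,…,n_k}, gaps r_{n₁,…,n_k}, parameters α_k = 10^{−k}, and the set E as defined in the context, for every k ≥ 1, all indices n₁, …, n_k ∈ ℕ⁺, and the interval K_{n₁,…,n_k} = [a_{n₁,…,n_{k−1},n_k+1}, a_{n₁,…,n_k}], one has |E ∩ K_{n₁,…,n_k}| ≥ (1 − 2α_k)·|K_{n₁,…,n_k}|. -/
open MeasureTheory Set Filter Topology

/-- `aSeq [n_k, n_{k-1}, …, n₁]` is the point `a_{n₁,…,n_k}` of the recursive construction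
(the list stores the indices with the *last* index first):
`a_n = 2^{-n}` and
`a_{n₁,…,n_k,n} = a_{n₁,…,n_{k-1},n_k+1} + 2^{-(n+3)} (a_{n₁,…,n_k} - a_{n₁,…,n_{k-1},n_k+1})`. -/
noncomputable def aSeq : List ℕ+ → ℝ
  | [] => 0
  | [n] => (2 : ℝ) ^ (-(n : ℤ))
  | n :: m :: L =>
      aSeq ((m + 1) :: L) + (2 : ℝ) ^ (-(n : ℤ) - 3) * (aSeq (m :: L) - aSeq ((m + 1) :: L))
  termination_by l => l.length

/-- `rSeq [n_k, …, n₁] = r_{n₁,…,n_k} = a_{n₁,…,n_k} - a_{n₁,…,n_{k-1},n_k+1}`. -/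
noncomputable def rSeq : List ℕ+ → ℝ
  | [] => 0
  | n :: L => aSeq (n :: L) - aSeq ((n + 1) :: L)

/-- `α_k = 10^{-k}`. -/
noncomputable def alphaSeq (k : ℕ) : ℝ := (10 : ℝ) ^ (-(k : ℤ))

/-- The left removed interval `I^L_{n₁,…,n_k}`. -/
noncomputable def ILSet (l : List ℕ+) : Set ℝ :=
  Set.Ioo (aSeq l - (1/2) * rSeq l) (aSeq l - (1/2 - alphaSeq l.length) * rSeq l)

/-- The right removed interval `I^R_{n₁,…,n_k}`. -/
noncomputable def IRSet (l : List ℕ+) : Set ℝ :=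
  Set.Ioo (aSeq l + (1/2 - alphaSeq l.length) * rSeq l) (aSeq l + (1/2) * rSeq l)

/-- The set `E = [-1,1] \ ⋃_{k ≥ 1, n₁,…,n_k} (I^L_{n₁,…,n_k} ∪ I^R_{n₁,…,n_k})`. -/
noncomputable def ESet : Set ℝ :=
  Set.Icc (-1 : ℝ) 1 \ ⋃ l ∈ {l : List ℕ+ | l ≠ []}, (ILSet l ∪ IRSet l)

lemma aSeq_cons (m p : ℕ+) (L : List ℕ+) :
    aSeq (m :: p :: L) = aSeq ((p+1) :: L) + (2:ℝ)^(-(m:ℤ)-3) * rSeq (p :: L) := by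
  rw [aSeq, rSeq]

lemma rSeq_def (p : ℕ+) (L : List ℕ+) :
    rSeq (p :: L) = aSeq (p :: L) - aSeq ((p+1) :: L) := rfl

lemma aSeq_single (n : ℕ+) : aSeq [n] = (2:ℝ)^(-(n:ℤ)) := by rw [aSeq]

lemma pnat_coe_add_one (p : ℕ+) : ((p + 1 : ℕ+) : ℤ) = (p:ℤ) + 1 := by push_cast; ring

lemma rSeq_single (n : ℕ+) : rSeq [n] = (2:ℝ)^(-(n:ℤ)-1) := by
  rw [rSeq_def, aSeq_single, aSeq_single, pnat_coe_add_one]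
  rw [show -((n:ℤ)+1) = -(n:ℤ) + (-1) by ring, zpow_add₀ (two_ne_zero), 
      show -(n:ℤ) - 1 = -(n:ℤ) + (-1) by ring, zpow_add₀ (two_ne_zero)]
  norm_num
  ring

lemma rSeq_cons (m p : ℕ+) (L : List ℕ+) :
    rSeq (m :: p :: L) = (2:ℝ)^(-(m:ℤ)-4) * rSeq (p :: L) := by
  rw [rSeq_def, aSeq_cons, aSeq_cons, pnat_coe_add_one]
  rw [show -((m:ℤ)+1) - 3 = (-(m:ℤ)-4) by ring,
      show -(m:ℤ) - 3 = (-(m:ℤ)-4) + 1 by ring, zpow_add₀ (two_ne_zero)]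
  ring

lemma rSeq_pos (p : ℕ+) (L : List ℕ+) : 0 < rSeq (p :: L) := by
  induction L generalizing p with
  | nil => rw [rSeq_single]; positivity
  | cons q L ih => rw [rSeq_cons]; exact mul_pos (by positivity) (ih q)

lemma rSeq_succ (p : ℕ+) (L : List ℕ+) : rSeq ((p+1) :: L) = rSeq (p :: L) / 2 := by
  cases L with
  | nil => 
    rw [rSeq_single, rSeq_single, pnat_coe_add_one,
        show -((p:ℤ)+1) - 1 = (-(p:ℤ)-1) + (-1) by ring, zpow_add₀ (two_ne_zero)]
    norm_num
    ring
  | cons q L =>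
    rw [rSeq_cons, rSeq_cons, pnat_coe_add_one,
        show -((p:ℤ)+1) - 4 = (-(p:ℤ)-4) + (-1) by ring, zpow_add₀ (two_ne_zero)]
    norm_num
    ring

lemma aSeq_succ (p : ℕ+) (L : List ℕ+) : aSeq ((p+1) :: L) = aSeq (p :: L) - rSeq (p :: L) := by
  rw [rSeq_def]; ring

lemma aSeq_anti {x y : ℕ+} (h : x ≤ y) (D : List ℕ+) : aSeq (y :: D) ≤ aSeq (x :: D) := by
  have hc : (x:ℤ) ≤ (y:ℤ) := by exact_mod_cast h
  cases D with
  | nil => 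
    rw [aSeq_single, aSeq_single]
    exact zpow_le_zpow_right₀ one_le_two (by omega)
  | cons q L =>
    rw [aSeq_cons, aSeq_cons]
    have := rSeq_pos q L
    have : (2:ℝ)^(-(y:ℤ)-3) ≤ (2:ℝ)^(-(x:ℤ)-3) := zpow_le_zpow_right₀ one_le_two (by omega)
    nlinarith [rSeq_pos q L]

lemma rSeq_anti {x y : ℕ+} (h : x ≤ y) (D : List ℕ+) : rSeq (y :: D) ≤ rSeq (x :: D) := by
  have hc : (x:ℤ) ≤ (y:ℤ) := by exact_mod_cast h
  cases D with
  | nil => rw [rSeq_single, rSeq_single]; exact zpow_le_zpow_right₀ one_le_two (by omega)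
  | cons q L =>
    rw [rSeq_cons, rSeq_cons]
    have h2 : (2:ℝ)^(-(y:ℤ)-4) ≤ (2:ℝ)^(-(x:ℤ)-4) := zpow_le_zpow_right₀ one_le_two (by omega)
    nlinarith [rSeq_pos q L]

lemma aSeq_pos (p : ℕ+) (L : List ℕ+) : 0 < aSeq (p :: L) := by
  induction L generalizing p with
  | nil => rw [aSeq_single]; positivity
  | cons q L ih => 
    rw [aSeq_cons]
    have := ih (q+1)
    have := rSeq_pos q L
    positivity

lemma aSeq_le_one (p : ℕ+) (L : List ℕ+) : aSeq (p :: L) ≤ 1 := by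
  induction L generalizing p with
  | nil => 
    rw [aSeq_single]
    calc (2:ℝ)^(-(p:ℤ)) ≤ (2:ℝ)^(0:ℤ) := zpow_le_zpow_right₀ one_le_two (by simp)
    _ = 1 := by norm_num
  | cons q L ih =>
    rw [aSeq_cons, aSeq_succ]
    have h1 := ih q
    have h2 := rSeq_pos q L
    have h3 : (2:ℝ)^(-(p:ℤ)-3) ≤ 1 := by
      calc (2:ℝ)^(-(p:ℤ)-3) ≤ (2:ℝ)^(0:ℤ) := zpow_le_zpow_right₀ one_le_two (by omega)
      _ = 1 := by norm_num
    nlinarith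

lemma alpha_pos (k : ℕ) : 0 < alphaSeq k := by unfold alphaSeq; positivity

lemma alpha_le_tenth (k : ℕ) : alphaSeq (k+1) ≤ 1/10 := by
  unfold alphaSeq
  calc (10:ℝ)^(-((k:ℤ)+1)) ≤ (10:ℝ)^(-1:ℤ) := by
        apply zpow_le_zpow_right₀ (by norm_num) (by omega)
    _ = 1/10 := by norm_num
  
lemma alpha_succ (k : ℕ) : alphaSeq (k+1) = alphaSeq k / 10 := by
  unfold alphaSeq
  push_cast
  rw [show -((k:ℤ)+1) = -(k:ℤ) + (-1) by ring, zpow_add₀ (by norm_num : (10:ℝ) ≠ 0)]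
  norm_num
  ring

lemma pnat_one_le (m : ℕ+) : (1:ℤ) ≤ (m:ℤ) := by exact_mod_cast m.one_le

lemma two_zpow_le {c : ℤ} (m : ℕ+) : ((2:ℝ)^(-(m:ℤ)+c)) ≤ (2:ℝ)^(-1+c) :=
  zpow_le_zpow_right₀ one_le_two (by have := pnat_one_le m; omega)

lemma two_zpow_pos (c : ℤ) : (0:ℝ) < (2:ℝ)^c := by positivity

/-- `Tb q D t` : t is in the open interval (a_{(q+1)::D}, a_{q::D} + r/2). -/
def Tb (q : ℕ+) (D : List ℕ+) (t : ℝ) : Prop :=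
  aSeq ((q+1)::D) < t ∧ t < aSeq (q::D) + rSeq (q::D)/2

/-- `Zb q D t` : t is in the "children zone" (a_{(q+1)::D}, a_{(q+1)::D} + r/8). -/
def Zb (q : ℕ+) (D : List ℕ+) (t : ℝ) : Prop :=
  aSeq ((q+1)::D) < t ∧ t < aSeq ((q+1)::D) + rSeq (q::D)/8

def TbL : List ℕ+ → ℝ → Prop
  | [], _ => False
  | q :: D, t => Tb q D t

lemma I_Tb {q : ℕ+} {D : List ℕ+} {t : ℝ} (h : t ∈ ILSet (q::D) ∪ IRSet (q::D)) :
    Tb q D t := by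
  have hα1 := alpha_pos (D.length + 1)
  have hα2 := alpha_le_tenth D.length
  have hr := rSeq_pos q D
  have hs := aSeq_succ q D
  simp only [ILSet, IRSet, List.length_cons, Set.mem_union, Set.mem_Ioo] at h
  constructor
  · rcases h with ⟨h1, _⟩ | ⟨h1, _⟩ <;> nlinarith
  · rcases h with ⟨_, h2⟩ | ⟨_, h2⟩ <;> nlinarith

lemma Tb_cons {m q : ℕ+} {D : List ℕ+} {t : ℝ} (h : Tb m (q::D) t) : Zb q D t := by
  obtain ⟨h1, h2⟩ := h
  have e1 : aSeq ((m+1) :: q :: D) = aSeq ((q+1)::D) + (2:ℝ)^(-((m+1:ℕ+):ℤ)-3) * rSeq (q::D) :=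
    aSeq_cons _ q D
  have e2 : aSeq (m :: q :: D) = aSeq ((q+1)::D) + (2:ℝ)^(-(m:ℤ)-3) * rSeq (q::D) :=
    aSeq_cons m q D
  have e3 : rSeq (m :: q :: D) = (2:ℝ)^(-(m:ℤ)-4) * rSeq (q::D) := rSeq_cons m q D
  have hr := rSeq_pos q D
  have b1 : (2:ℝ)^(-(m:ℤ)-3) ≤ (2:ℝ)^(-4:ℤ) := by
    have := two_zpow_le (c := -3) m; norm_num at this ⊢; exact this
  have b2 : (2:ℝ)^(-(m:ℤ)-4) ≤ (2:ℝ)^(-5:ℤ) := by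
    have := two_zpow_le (c := -4) m; norm_num at this ⊢; exact this
  have p1 : (0:ℝ) < (2:ℝ)^(-((m+1:ℕ+):ℤ)-3) := two_zpow_pos _
  constructor
  · nlinarith
  · have n4 : ((2:ℝ)^(-4:ℤ)) = 1/16 := by norm_num
    have n5 : ((2:ℝ)^(-5:ℤ)) = 1/32 := by norm_num
    rw [n4] at b1; rw [n5] at b2
    nlinarith [mul_le_mul_of_nonneg_right b1 hr.le, mul_le_mul_of_nonneg_right b2 hr.le]

lemma Zb_Tb {q : ℕ+} {D : List ℕ+} {t : ℝ} (h : Zb q D t) : Tb q D t := by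
  obtain ⟨h1, h2⟩ := h
  have hr := rSeq_pos q D
  have hs := aSeq_succ q D
  exact ⟨h1, by nlinarith⟩

lemma exists_cons_append (M : List ℕ+) (q : ℕ+) (D : List ℕ+) :
    ∃ q' D', M ++ q :: D = q' :: D' := by
  cases M with
  | nil => exact ⟨q, D, rfl⟩
  | cons a M => exact ⟨a, M ++ q :: D, rfl⟩

lemma Tb_append : ∀ (M : List ℕ+) (q : ℕ+) (D : List ℕ+) (t : ℝ),
    TbL (M ++ q :: D) t → Tb q D t := by
  intro M
  induction M with
  | nil => intro q D t h; exact h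
  | cons m M ih =>
    intro q D t h
    obtain ⟨q', D', hE⟩ := exists_cons_append M q D
    have h' : Tb m (q' :: D') t := by rw [List.cons_append, hE] at h; exact h
    have : Tb q' D' t := Zb_Tb (Tb_cons h')
    exact ih q D t (by rw [hE]; exact this)

lemma Zb_append : ∀ (M : List ℕ+) (q : ℕ+) (D : List ℕ+) (t : ℝ), M ≠ [] →
    TbL (M ++ q :: D) t → Zb q D t := by
  intro M
  induction M with
  | nil => intro q D t h; exact absurd rfl h
  | cons m M ih =>
    intro q D t _ h
    cases M with
    | nil => exact Tb_cons (h : Tb m (q::D) t)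
    | cons m' M' =>
      obtain ⟨q', D', hE⟩ := exists_cons_append (m'::M') q D
      have h' : Tb m (q' :: D') t := by rw [List.cons_append, hE] at h; exact h
      have : Tb q' D' t := Zb_Tb (Tb_cons h')
      exact ih q D t (by simp) (by rw [hE]; exact this)

lemma prefix_trichotomy : ∀ (a b : List ℕ+), a <+: b ∨ b <+: a ∨
    ∃ (C : List ℕ+) (x y : ℕ+), x ≠ y ∧ (C ++ [x]) <+: a ∧ (C ++ [y]) <+: b := by
  intro a
  induction a with
  | nil => intro b; exact Or.inl (List.nil_prefix)
  | cons x a ih =>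
    intro b
    cases b with
    | nil => exact Or.inr (Or.inl List.nil_prefix)
    | cons y b =>
      by_cases hxy : x = y
      · subst hxy
        rcases ih b with h | h | ⟨C, u, v, huv, h1, h2⟩
        · exact Or.inl (by simpa using h)
        · exact Or.inr (Or.inl (by simpa using h))
        · exact Or.inr (Or.inr ⟨x :: C, u, v, huv, by simpa using h1, by simpa using h2⟩)
      · exact Or.inr (Or.inr ⟨[], x, y, hxy, by simp, by simp⟩)

lemma suffix_trichotomy (s t : List ℕ+) : s <:+ t ∨ t <:+ s ∨
    ∃ (D : List ℕ+) (x y : ℕ+), x ≠ y ∧ (x :: D) <:+ s ∧ (y :: D) <:+ t := by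
  rcases prefix_trichotomy s.reverse t.reverse with h | h | ⟨C, x, y, hxy, h1, h2⟩
  · left; rw [← List.reverse_prefix]; exact h
  · right; left; rw [← List.reverse_prefix]; exact h
  · right; right
    refine ⟨C.reverse, x, y, hxy, ?_, ?_⟩
    · rw [← List.reverse_prefix]; simpa using h1
    · rw [← List.reverse_prefix]; simpa using h2

noncomputable def UU : Set ℝ := ⋃ l ∈ {l : List ℕ+ | l ≠ []}, (ILSet l ∪ IRSet l)

lemma mem_UU {t : ℝ} : t ∈ UU ↔ ∃ l, l ≠ [] ∧ t ∈ ILSet l ∪ IRSet l := by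
  simp [UU, Set.mem_iUnion]

lemma pnat_succ_le {x y : ℕ+} (h : y < x) : y + 1 ≤ x := by
  rw [← PNat.coe_le_coe]; rw [← PNat.coe_lt_coe] at h; push_cast; omega

lemma I_lower {q : ℕ+} {D : List ℕ+} {t : ℝ} (h : t ∈ ILSet (q::D) ∪ IRSet (q::D)) :
    aSeq (q::D) - rSeq (q::D)/2 < t := by
  have hα1 := alpha_pos (D.length + 1)
  have hα2 := alpha_le_tenth D.length
  have hr := rSeq_pos q D
  simp only [ILSet, IRSet, List.length_cons, Set.mem_union, Set.mem_Ioo] at h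
  rcases h with ⟨h1, _⟩ | ⟨h1, _⟩ <;> nlinarith

lemma cover (p : ℕ+) (L : List ℕ+) :
    UU ∩ Set.Ioo (aSeq ((p+1)::L)) (aSeq (p::L)) ⊆
      ILSet (p::L) ∪ IRSet ((p+1)::L) ∪ IRSet ((1:ℕ+)::p::L) ∪
        ⋃ m : ℕ+, UU ∩ Set.Ioo (aSeq ((m+1)::p::L)) (aSeq (m::p::L)) := by
  rintro t ⟨htU, htlo, hthi⟩
  obtain ⟨l', hl', hI⟩ := mem_UU.mp htU
  obtain ⟨q, D, rfl⟩ := List.exists_cons_of_ne_nil hl'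
  have htU' : t ∈ UU := mem_UU.mpr ⟨q::D, by simp, hI⟩
  -- the case `q::D = p::L`
  by_cases heq : q::D = (p::L : List ℕ+)
  · rw [heq] at hI
    rcases hI with hIL | hIR
    · exact Or.inl (Or.inl (Or.inl hIL))
    · exfalso
      have hα1 := alpha_pos (L.length + 1)
      have hα2 := alpha_le_tenth L.length
      have hr := rSeq_pos p L
      simp only [IRSet, List.length_cons, Set.mem_Ioo] at hIR
      nlinarith [hIR.1]
  rcases suffix_trichotomy (p::L) (q::D) with ⟨M, hM⟩ | ⟨M, hM⟩ | ⟨D₀, x, y, hxy, ⟨M₁, hM₁⟩, ⟨M₂, hM₂⟩⟩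
  · -- q::D = M ++ p::L, a descendant
    rcases List.eq_nil_or_concat M with rfl | ⟨M₂, m, rfl⟩
    · exact absurd hM.symm heq
    · rw [List.concat_eq_append, List.append_assoc, List.singleton_append] at hM
      by_cases hM₂0 : M₂ = []
      · subst hM₂0
        rw [List.nil_append] at hM
        -- q::D = m::p::L : a child
        have hq : q = m := by injection hM.symm
        have hD : D = p::L := by injection hM.symm
        subst hq; subst hD
        rcases hI with hIL | hIR
        · -- left interval of child m
          refine Or.inr ?_
          refine Set.mem_iUnion.mpr ⟨q, htU', ?_⟩
          have hα1 := alpha_pos (L.length + 1 + 1)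
          have hα2 := alpha_le_tenth (L.length + 1)
          have hr := rSeq_pos q (p::L)
          have hs := aSeq_succ q (p::L)
          simp only [ILSet, List.length_cons, Set.mem_Ioo] at hIL ⊢
          constructor
          · nlinarith [hIL.1]
          · nlinarith [hIL.2]
        · rcases eq_or_ne q 1 with rfl | hm
          · exact Or.inl (Or.inr hIR)
          · obtain ⟨m', rfl⟩ := PNat.exists_eq_succ_of_ne_one hm
            refine Or.inr ?_
            refine Set.mem_iUnion.mpr ⟨m', htU', ?_⟩
            have hα1 := alpha_pos (L.length + 1 + 1)
            have hα2 := alpha_le_tenth (L.length + 1)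
            have hr := rSeq_pos (m'+1) (p::L)
            have hr' := rSeq_pos m' (p::L)
            have hs : aSeq ((m'+1)::p::L) = aSeq (m'::p::L) - rSeq (m'::p::L) :=
              aSeq_succ m' (p::L)
            have hrs : rSeq ((m'+1)::p::L) = rSeq (m'::p::L) / 2 := rSeq_succ m' (p::L)
            simp only [IRSet, List.length_cons, Set.mem_Ioo] at hIR ⊢
            constructor
            · nlinarith [hIR.1]
            · nlinarith [hIR.2]
      · -- strict descendant of child m
        have hZ : Zb m (p::L) t := by
          apply Zb_append M₂ m (p::L) t hM₂0
          rw [hM]; exact I_Tb hI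
        refine Or.inr ?_
        refine Set.mem_iUnion.mpr ⟨m, htU', ?_⟩
        have hr := rSeq_pos m (p::L)
        have hs := aSeq_succ m (p::L)
        obtain ⟨hZ1, hZ2⟩ := hZ
        exact ⟨hZ1, by nlinarith⟩
  · -- p::L = M ++ q::D : q::D is a strict ancestor; contradiction
    exfalso
    have hM0 : M ≠ [] := by
      intro h; subst h; exact heq hM
    have hTb : Tb p L t := ⟨htlo, by nlinarith [rSeq_pos p L]⟩
    have hZ : Zb q D t := by
      apply Zb_append M q D t hM0
      rw [hM]; exact hTb
    have hlow := I_lower hI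
    have hs := aSeq_succ q D
    have hr := rSeq_pos q D
    obtain ⟨_, hZ2⟩ := hZ
    nlinarith
  · -- diverging case
    -- region bounds relative to x::D₀
    have hreg : aSeq ((x+1)::D₀) < t ∧ t < aSeq (x::D₀) := by
      by_cases hM₁0 : M₁ = []
      · subst hM₁0
        rw [List.nil_append] at hM₁
        have hp : x = p := by injection hM₁
        have hL : D₀ = L := by injection hM₁
        subst hp; subst hL
        exact ⟨htlo, hthi⟩
      · have hTb : Tb p L t := ⟨htlo, by nlinarith [rSeq_pos p L]⟩
        have hZ : Zb x D₀ t := by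
          apply Zb_append M₁ x D₀ t hM₁0
          rw [hM₁]; exact hTb
        have hs := aSeq_succ x D₀
        have hr := rSeq_pos x D₀
        exact ⟨hZ.1, by nlinarith [hZ.2]⟩
    have hIy : Tb y D₀ t := by
      apply Tb_append M₂ y D₀ t
      rw [hM₂]; exact I_Tb hI
    rcases lt_or_gt_of_ne hxy with hlt | hgt
    · -- x < y
      rcases eq_or_lt_of_le (pnat_succ_le hlt) with hy1 | hy2
      · -- y = x + 1
        subst hy1
        by_cases hM₂0 : M₂ = []
        · subst hM₂0
          rw [List.nil_append] at hM₂
          have hq : x+1 = q := by injection hM₂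
          have hD : D₀ = D := by injection hM₂
          subst hq; subst hD
          rcases hI with hIL | hIR
          · exfalso
            have hα1 := alpha_pos (D₀.length + 1)
            have hα2 := alpha_le_tenth D₀.length
            have hr := rSeq_pos (x+1) D₀
            simp only [ILSet, List.length_cons, Set.mem_Ioo] at hIL
            nlinarith [hIL.2, hreg.1]
          · by_cases hM₁0 : M₁ = []
            · subst hM₁0
              rw [List.nil_append] at hM₁
              have hp : x = p := by injection hM₁
              have hL : D₀ = L := by injection hM₁
              subst hp; subst hL
              exact Or.inl (Or.inl (Or.inr hIR))
            · exfalso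
              have hTb : Tb p L t := ⟨htlo, by nlinarith [rSeq_pos p L]⟩
              have hZ : Zb x D₀ t := by
                apply Zb_append M₁ x D₀ t hM₁0
                rw [hM₁]; exact hTb
              have hα1 := alpha_pos (D₀.length + 1)
              have hα2 := alpha_le_tenth D₀.length
              have hr := rSeq_pos (x+1) D₀
              have hrx := rSeq_pos x D₀
              have hrs : rSeq ((x+1)::D₀) = rSeq (x::D₀) / 2 := rSeq_succ x D₀
              simp only [IRSet, List.length_cons, Set.mem_Ioo] at hIR
              nlinarith [hIR.1, hZ.2]
        · exfalso
          have hZ : Zb (x+1) D₀ t := by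
            apply Zb_append M₂ (x+1) D₀ t hM₂0
            rw [hM₂]; exact I_Tb hI
          have hs : aSeq (((x+1)+1)::D₀) = aSeq ((x+1)::D₀) - rSeq ((x+1)::D₀) := aSeq_succ (x+1) D₀
          have hry := rSeq_pos (x+1) D₀
          nlinarith [hZ.2, hreg.1]
      · -- y ≥ x + 2
        exfalso
        have h1 : aSeq (y::D₀) ≤ aSeq (((x+1)+1)::D₀) := aSeq_anti hy2 D₀
        have h2 : rSeq (y::D₀) ≤ rSeq (((x+1)+1)::D₀) := rSeq_anti hy2 D₀
        have hs : aSeq (((x+1)+1)::D₀) = aSeq ((x+1)::D₀) - rSeq ((x+1)::D₀) :=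
          aSeq_succ (x+1) D₀
        have hrs : rSeq (((x+1)+1)::D₀) = rSeq ((x+1)::D₀) / 2 := rSeq_succ (x+1) D₀
        have hr1 := rSeq_pos (x+1) D₀
        have hry := rSeq_pos y D₀
        nlinarith [hIy.2, hreg.1]
    · -- y < x
      exfalso
      have h1 : aSeq (x::D₀) ≤ aSeq ((y+1)::D₀) := aSeq_anti (pnat_succ_le hgt) D₀
      nlinarith [hIy.1, hreg.2]

lemma volume_IL (q : ℕ+) (D : List ℕ+) :
    volume (ILSet (q::D)) = ENNReal.ofReal (alphaSeq (D.length+1) * rSeq (q::D)) := by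
  simp only [ILSet, List.length_cons, Real.volume_Ioo]
  congr 1; ring

lemma volume_IR (q : ℕ+) (D : List ℕ+) :
    volume (IRSet (q::D)) = ENNReal.ofReal (alphaSeq (D.length+1) * rSeq (q::D)) := by
  simp only [IRSet, List.length_cons, Real.volume_Ioo]
  congr 1; ring

lemma tsum_geom (c : ℝ) (hc : 0 ≤ c) (p : ℕ+) (L : List ℕ+) :
    ∑' m : ℕ+, ENNReal.ofReal (c * rSeq (m::p::L)) = ENNReal.ofReal (c * rSeq (p::L) / 16) := by
  have hr := rSeq_pos p L
  have key : ∀ i : ℕ, c * rSeq ((Equiv.pnatEquivNat.symm i)::p::L)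
      = (c * rSeq (p::L) / 32) * (1/2)^i := by
    intro i
    rw [rSeq_cons]
    have hco : ((Equiv.pnatEquivNat.symm i : ℕ+):ℤ) = (i:ℤ)+1 := by
      simp [Equiv.pnatEquivNat]
    have h1 : (2:ℝ)^(-((i:ℤ)+1)-4) = ((2:ℝ)^((i+5:ℕ)))⁻¹ := by
      rw [← zpow_natCast (2:ℝ), ← zpow_neg]
      congr 1
      all_goals (push_cast; ring)
    have h2 : ((2:ℝ)^(i+5:ℕ))⁻¹ = (1/2)^i * (1/32) := by
      rw [pow_add, mul_inv, ← inv_pow]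
      norm_num
    rw [hco, h1, h2]
    ring
  calc ∑' m : ℕ+, ENNReal.ofReal (c * rSeq (m::p::L))
      = ∑' i : ℕ, ENNReal.ofReal (c * rSeq ((Equiv.pnatEquivNat.symm i)::p::L)) :=
        (Equiv.pnatEquivNat.symm.tsum_eq (fun m => ENNReal.ofReal (c * rSeq (m::p::L)))).symm
    _ = ∑' i : ℕ, ENNReal.ofReal (c * rSeq (p::L) / 32) * (ENNReal.ofReal (1/2))^i := by
        congr 1; funext i
        rw [key i, ENNReal.ofReal_mul (by positivity), ENNReal.ofReal_pow (by norm_num)]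
    _ = ENNReal.ofReal (c * rSeq (p::L) / 32) * (1 - ENNReal.ofReal (1/2))⁻¹ := by
        rw [ENNReal.tsum_mul_left, ENNReal.tsum_geometric]
    _ = ENNReal.ofReal (c * rSeq (p::L) / 16) := by
        have h12 : ENNReal.ofReal (1/2:ℝ) = (2:ENNReal)⁻¹ := by
          rw [show (1/2:ℝ) = (2:ℝ)⁻¹ by norm_num, ENNReal.ofReal_inv_of_pos (by norm_num)]
          norm_num
        have h3 : (1 - (2:ENNReal)⁻¹)⁻¹ = 2 := by
          rw [ENNReal.one_sub_inv_two]
          exact inv_inv 2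
        rw [h12, h3, show (2:ENNReal) = ENNReal.ofReal (2:ℝ) by norm_num,
            ← ENNReal.ofReal_mul (by positivity)]
        congr 1; ring

lemma main_bound : ∀ (j : ℕ) (p : ℕ+) (L : List ℕ+),
    volume (UU ∩ Set.Ioo (aSeq ((p+1)::L)) (aSeq (p::L))) ≤
      ENNReal.ofReal ((8/5 * alphaSeq (L.length+1) + (1/16:ℝ)^j) * rSeq (p::L)) := by
  intro j
  induction j with
  | zero =>
    intro p L
    calc volume (UU ∩ Set.Ioo (aSeq ((p+1)::L)) (aSeq (p::L)))
        ≤ volume (Set.Ioo (aSeq ((p+1)::L)) (aSeq (p::L))) :=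
          measure_mono Set.inter_subset_right
      _ = ENNReal.ofReal (aSeq (p::L) - aSeq ((p+1)::L)) := Real.volume_Ioo
      _ ≤ _ := by
          apply ENNReal.ofReal_le_ofReal
          have h1 : rSeq (p::L) = aSeq (p::L) - aSeq ((p+1)::L) := rSeq_def p L
          have := rSeq_pos p L
          have := alpha_pos (L.length+1)
          nlinarith
  | succ j ih =>
    intro p L
    have hr := rSeq_pos p L
    have hα := alpha_pos (L.length+1)
    have hα2 := alpha_le_tenth L.length
    have hαs : alphaSeq (L.length+1+1) = alphaSeq (L.length+1) / 10 := alpha_succ _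
    have step1 : volume (UU ∩ Set.Ioo (aSeq ((p+1)::L)) (aSeq (p::L))) ≤
        volume (ILSet (p::L)) + volume (IRSet ((p+1)::L)) + volume (IRSet ((1:ℕ+)::p::L)) +
          ∑' m : ℕ+, volume (UU ∩ Set.Ioo (aSeq ((m+1)::p::L)) (aSeq (m::p::L))) := by
      refine le_trans (measure_mono (cover p L)) ?_
      refine le_trans (measure_union_le _ _) ?_
      gcongr
      · refine le_trans (measure_union_le _ _) ?_
        gcongr
        exact measure_union_le _ _
      · exact measure_iUnion_le _
    have hIL : volume (ILSet (p::L)) = ENNReal.ofReal (alphaSeq (L.length+1) * rSeq (p::L)) :=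
      volume_IL p L
    have hIR1 : volume (IRSet ((p+1)::L)) =
        ENNReal.ofReal (alphaSeq (L.length+1) * (rSeq (p::L) / 2)) := by
      rw [volume_IR, rSeq_succ]
    have hr1 : rSeq ((1:ℕ+)::p::L) = (1/32) * rSeq (p::L) := by
      rw [rSeq_cons]
      norm_num
    have hIR2 : volume (IRSet ((1:ℕ+)::p::L)) =
        ENNReal.ofReal ((alphaSeq (L.length+1)/10) * ((1/32) * rSeq (p::L))) := by
      rw [volume_IR, List.length_cons, hr1, hαs]
    have hsum : ∑' m : ℕ+, volume (UU ∩ Set.Ioo (aSeq ((m+1)::p::L)) (aSeq (m::p::L))) ≤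
        ENNReal.ofReal ((8/5 * alphaSeq (L.length+1+1) + (1/16:ℝ)^j) * rSeq (p::L) / 16) := by
      have hc : (0:ℝ) ≤ 8/5 * alphaSeq (L.length+1+1) + (1/16:ℝ)^j := by
        nlinarith [alpha_pos (L.length+1+1), pow_nonneg (by norm_num : (0:ℝ) ≤ 1/16) j]
      rw [← tsum_geom _ hc p L]
      apply ENNReal.tsum_le_tsum
      intro m
      simpa using ih m (p::L)
    refine le_trans step1 ?_
    rw [hIL, hIR1, hIR2]
    refine le_trans (add_le_add_right hsum _) ?_
    have hα' := alpha_pos (L.length+1+1)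
    have hpj : (0:ℝ) ≤ (1/16:ℝ)^j := by positivity
    have n1 : (0:ℝ) ≤ alphaSeq (L.length+1) * rSeq (p::L) := mul_nonneg hα.le hr.le
    have n2 : (0:ℝ) ≤ alphaSeq (L.length+1) * (rSeq (p::L)/2) := mul_nonneg hα.le (by linarith)
    have n3 : (0:ℝ) ≤ alphaSeq (L.length+1)/10 * (1/32 * rSeq (p::L)) :=
      mul_nonneg (by linarith) (by linarith)
    have n4 : (0:ℝ) ≤ (8/5 * alphaSeq (L.length+1+1) + (1/16:ℝ)^j) * rSeq (p::L) / 16 := by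
      apply div_nonneg _ (by norm_num)
      exact mul_nonneg (by nlinarith) hr.le
    rw [← ENNReal.ofReal_add n1 n2, ← ENNReal.ofReal_add (by linarith) n3,
        ← ENNReal.ofReal_add (by linarith) n4]
    apply ENNReal.ofReal_le_ofReal
    rw [hαs]
    have hp : (1/16:ℝ)^(j+1) = (1/16)^j * (1/16) := pow_succ _ _
    nlinarith [mul_nonneg hα.le hr.le, mul_nonneg (pow_nonneg (by norm_num : (0:ℝ) ≤ 1/16) j) hr.le]

lemma ESet_eq : ESet = Set.Icc (-1 : ℝ) 1 \ UU := rfl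

lemma pow16_le (n : ℕ) : (1/16:ℝ)^(n+1+1) ≤ (2/5) * alphaSeq (n+1) := by
  have h0 : alphaSeq (n+1) = (1/10:ℝ)^(n+1) := by
    unfold alphaSeq
    rw [zpow_neg, zpow_natCast, ← inv_pow]
    norm_num
  have h1 : (1/16:ℝ)^(n+1) ≤ (1/10:ℝ)^(n+1) :=
    pow_le_pow_left₀ (by norm_num) (by norm_num) _
  have h2 : (0:ℝ) < (1/10:ℝ)^(n+1) := by positivity
  rw [h0, pow_succ]
  nlinarith


/-- For `K_{n₁,…,n_k} = [a_{n₁,…,n_{k-1},n_k+1}, a_{n₁,…,n_k}]`, one has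
`|E ∩ K_{n₁,…,n_k}| ≥ (1 - 2α_k) |K_{n₁,…,n_k}|`. Here the sequence `(n₁,…,n_k)` is
encoded as the list `n :: L` with `n = n_k` the last index and `k = L.length + 1`. -/
theorem measure_ESet_inter_K (n : ℕ+) (L : List ℕ+) :
    (1 - 2 * alphaSeq (L.length + 1)) *
        (volume (Set.Icc (aSeq ((n + 1) :: L)) (aSeq (n :: L)))).toReal
      ≤ (volume (ESet ∩ Set.Icc (aSeq ((n + 1) :: L)) (aSeq (n :: L)))).toReal := by
  set lo := aSeq ((n+1)::L) with hlo
  set a := aSeq (n::L) with ha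
  have hr : 0 < rSeq (n::L) := rSeq_pos n L
  have hrd : rSeq (n::L) = a - lo := rSeq_def n L
  have hloa : lo ≤ a := by linarith
  have hα := alpha_pos (L.length+1)
  have hα2 := alpha_le_tenth L.length
  set R := rSeq (n::L) with hR
  set α := alphaSeq (L.length+1) with hαdef
  -- K sits inside [-1, 1]
  have hsub : Set.Icc lo a ⊆ Set.Icc (-1:ℝ) 1 := by
    apply Set.Icc_subset_Icc
    · have := aSeq_pos (n+1) L; linarith
    · exact aSeq_le_one n L
  have hEK : ESet ∩ Set.Icc lo a = Set.Icc lo a \ UU := by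
    rw [ESet_eq]
    ext t
    constructor
    · rintro ⟨⟨_, h2⟩, h3⟩; exact ⟨h3, h2⟩
    · rintro ⟨h3, h2⟩; exact ⟨⟨hsub h3, h2⟩, h3⟩
  -- bound the measure of UU inside K
  have hIccIoo : UU ∩ Set.Icc lo a ⊆ (UU ∩ Set.Ioo lo a) ∪ ({lo, a} : Set ℝ) := by
    rintro t ⟨htU, ht1, ht2⟩
    rcases eq_or_lt_of_le ht1 with h | h
    · exact Or.inr (Or.inl h.symm)
    rcases eq_or_lt_of_le ht2 with h' | h'
    · exact Or.inr (Or.inr h')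
    · exact Or.inl ⟨htU, h, h'⟩
  have hpair : volume ({lo, a} : Set ℝ) = 0 := by
    have hc : ({lo, a} : Set ℝ).Countable := (Set.countable_singleton a).insert lo
    exact hc.measure_zero _
  have hUbound : volume (UU ∩ Set.Icc lo a) ≤ ENNReal.ofReal (2 * α * R) := by
    refine le_trans (measure_mono hIccIoo) ?_
    refine le_trans (measure_union_le _ _) ?_
    rw [hpair, add_zero]
    refine le_trans (main_bound (L.length + 1 + 1) n L) ?_
    apply ENNReal.ofReal_le_ofReal
    have := pow16_le L.length
    nlinarith
  -- split K
  have hKsplit : volume (Set.Icc lo a) ≤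
      volume (Set.Icc lo a \ UU) + volume (UU ∩ Set.Icc lo a) := by
    refine le_trans (measure_mono ?_) (measure_union_le _ _)
    intro t ht
    by_cases h : t ∈ UU
    · exact Or.inr ⟨h, ht⟩
    · exact Or.inl ⟨ht, h⟩
  have hKvol : volume (Set.Icc lo a) = ENNReal.ofReal R := by
    rw [Real.volume_Icc]; congr 1
  have hfin : volume (Set.Icc lo a \ UU) ≠ ⊤ := by
    apply ne_of_lt
    calc volume (Set.Icc lo a \ UU) ≤ volume (Set.Icc lo a) :=
          measure_mono Set.diff_subset
      _ < ⊤ := by rw [hKvol]; exact ENNReal.ofReal_lt_top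
  have hmain : ENNReal.ofReal R ≤ volume (Set.Icc lo a \ UU) + ENNReal.ofReal (2 * α * R) := by
    rw [← hKvol]
    exact le_trans hKsplit (add_le_add_right hUbound _)
  have htoReal : R ≤ (volume (Set.Icc lo a \ UU)).toReal + 2 * α * R := by
    have h1 : (ENNReal.ofReal R).toReal ≤
        (volume (Set.Icc lo a \ UU) + ENNReal.ofReal (2 * α * R)).toReal := by
      apply ENNReal.toReal_mono _ hmain
      exact ENNReal.add_ne_top.mpr ⟨hfin, ENNReal.ofReal_ne_top⟩
    rw [ENNReal.toReal_add hfin ENNReal.ofReal_ne_top, ENNReal.toReal_ofReal hr.le,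
        ENNReal.toReal_ofReal (by nlinarith)] at h1
    exact h1
  rw [hEK, hKvol]
  rw [ENNReal.toReal_ofReal hr.le]
  nlinarith
end

section
/- With the recursively constructed points a_{n₁,…,n_k} as defined in the context, let A = { a_{n₁,…,n_k} : k ≥ 1, n₁,…,n_k ∈ ℕ⁺ }. Then the closure of A in ℝ has Lebesgue measure zero; in fact, no point of the closure of A is a Lebesgue density point of the closure of A. -/
open MeasureTheory Set Filter Topology

noncomputable def beta : List ℕ+ → ℝ
  | [] => 0
  | m :: L => aSeq ((m + 1) :: L)

noncomputable def rho : List ℕ+ → ℝ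
  | [] => 8
  | m :: L => aSeq (m :: L) - aSeq ((m + 1) :: L)

lemma aSeq_cons_s8 (n : ℕ+) (t : List ℕ+) :
    aSeq (n :: t) = beta t + 2 ^ (-(n : ℤ) - 3) * rho t := by
  cases t with
  | nil =>
      show aSeq [n] = beta [] + 2 ^ (-(n : ℤ) - 3) * rho []
      rw [aSeq, beta, rho]
      rw [show (8:ℝ) = (2:ℝ)^(3:ℤ) by norm_num, ← zpow_add₀ (two_ne_zero)]
      ring_nf
  | cons m L =>
      rw [aSeq, beta, rho]

lemma pnat_succ_coe (n : ℕ+) : ((n + 1 : ℕ+) : ℤ) = (n : ℤ) + 1 := by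
  push_cast [PNat.add_coe]
  ring

lemma beta_cons (n : ℕ+) (t : List ℕ+) :
    beta (n :: t) = beta t + 2 ^ (-(n : ℤ) - 4) * rho t := by
  show aSeq ((n + 1) :: t) = _
  rw [aSeq_cons_s8, pnat_succ_coe]
  ring_nf

lemma rho_cons (n : ℕ+) (t : List ℕ+) :
    rho (n :: t) = 2 ^ (-(n : ℤ) - 4) * rho t := by
  show aSeq (n :: t) - aSeq ((n + 1) :: t) = _
  rw [aSeq_cons_s8, aSeq_cons_s8, pnat_succ_coe]
  have h1 : (2:ℝ) ^ (-(n:ℤ) - 3) = 2 * 2 ^ (-(n:ℤ) - 4) := by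
    rw [show (-(n:ℤ) - 3) = 1 + (-(n:ℤ) - 4) by ring, zpow_add₀ (two_ne_zero : (2:ℝ) ≠ 0)]
    norm_num
  have h2 : (2:ℝ) ^ (-((n:ℤ) + 1) - 3) = 2 ^ (-(n:ℤ) - 4) := by ring_nf
  rw [h1, h2]; ring

lemma rho_pos : ∀ t : List ℕ+, 0 < rho t := by
  intro t
  induction t with
  | nil => norm_num [rho]
  | cons n t ih =>
      rw [rho_cons]
      exact mul_pos (zpow_pos two_pos _) ih

lemma two_zpow_mono {a b : ℤ} (h : a ≤ b) : (2:ℝ) ^ a ≤ 2 ^ b :=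
  zpow_le_zpow_right₀ one_le_two h

noncomputable def G : ℕ → ℕ → ℝ → ℝ → Set ℝ
  | 0, _, β, ρ => Icc β (β + ρ / 16)
  | (k + 1), N, β, ρ =>
      Icc β (β + 2 ^ (-(N : ℤ) - 3) * ρ) ∪
        ⋃ n ∈ Finset.Icc 1 N,
          ({β + 2 ^ (-(n : ℤ) - 3) * ρ} ∪
            G k N (β + 2 ^ (-(n : ℤ) - 4) * ρ) (2 ^ (-(n : ℤ) - 4) * ρ))

lemma isClosed_G : ∀ k N β ρ, IsClosed (G k N β ρ) := by
  intro k
  induction k with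
  | zero => intro N β ρ; exact isClosed_Icc
  | succ k ih =>
      intro N β ρ
      refine IsClosed.union isClosed_Icc ?_
      refine Set.Finite.isClosed_biUnion (Finset.Icc 1 N).finite_toSet ?_
      intro n _
      exact IsClosed.union isClosed_singleton (ih N _ _)

lemma L0 (s : List ℕ+) :
    ∀ t, s ≠ [] → aSeq (s ++ t) ∈ Icc (beta t) (beta t + rho t / 16) := by
  induction s using List.reverseRecOn with
  | nil => intro t h; exact absurd rfl h
  | append_singleton s' n ih =>
      intro t _
      have hl : s' ++ [n] ++ t = s' ++ (n :: t) := by simp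
      rw [hl]
      have hρ := rho_pos t
      rcases eq_or_ne s' [] with rfl | hs'
      · simp only [List.nil_append]
        rw [aSeq_cons_s8]
        have hn1 : (1:ℕ) ≤ (n:ℕ) := n.one_le
        have hn : (2:ℝ) ^ (-(n:ℤ) - 3) ≤ 2 ^ (-4 : ℤ) := two_zpow_mono (by omega)
        have hpos : (0:ℝ) < 2 ^ (-(n:ℤ) - 3) := zpow_pos two_pos _
        have h4 : ((2:ℝ))^(-4:ℤ) = 1/16 := by norm_num
        have key : 2 ^ (-(n:ℤ) - 3) * rho t ≤ (1/16) * rho t := by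
          apply mul_le_mul_of_nonneg_right _ hρ.le
          rw [← h4]; exact hn
        constructor
        · nlinarith
        · linarith
      · have h := ih (n :: t) hs'
        rw [beta_cons, rho_cons] at h
        have hn1 : (1:ℕ) ≤ (n:ℕ) := n.one_le
        have hn : (2:ℝ) ^ (-(n:ℤ) - 4) ≤ 2 ^ (-5 : ℤ) := two_zpow_mono (by omega)
        have h5 : ((2:ℝ))^(-5:ℤ) = 1/32 := by norm_num
        have hpos : (0:ℝ) < 2 ^ (-(n:ℤ) - 4) := zpow_pos two_pos _
        have key : 2 ^ (-(n:ℤ) - 4) * rho t ≤ (1/32) * rho t := by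
          apply mul_le_mul_of_nonneg_right _ hρ.le
          rw [← h5]; exact hn
        constructor
        · nlinarith [h.1, mul_pos hpos hρ]
        · nlinarith [h.2]

lemma LG : ∀ (k N : ℕ) (s t : List ℕ+), s ≠ [] → aSeq (s ++ t) ∈ G k N (beta t) (rho t) := by
  intro k
  induction k with
  | zero => intro N s t hs; exact L0 s t hs
  | succ k ihk =>
      intro N s t hs
      obtain ⟨s', n, rfl⟩ := s.eq_nil_or_concat.resolve_left hs
      have hl : s'.concat n ++ t = s' ++ (n :: t) := by simp
      rw [hl]
      simp only [G]
      have hρ := rho_pos t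
      have hn1 : (1:ℕ) ≤ (n:ℕ) := n.one_le
      by_cases hN : (n:ℕ) ≤ N
      · right
        refine Set.mem_biUnion (?_ : (n:ℕ) ∈ Finset.Icc 1 N) ?_
        · simp [Finset.mem_Icc, hn1, hN]
        rcases eq_or_ne s' [] with rfl | hs'
        · left
          simp only [List.nil_append, Set.mem_singleton_iff]
          rw [aSeq_cons_s8]
        · right
          have h := ihk N s' (n :: t) hs'
          rw [beta_cons, rho_cons] at h
          convert h using 3
      · left
        push_neg at hN
        rcases eq_or_ne s' [] with rfl | hs'
        · simp only [List.nil_append]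
          rw [aSeq_cons_s8]
          have hpos : (0:ℝ) < 2 ^ (-(n:ℤ) - 3) := zpow_pos two_pos _
          have hle : (2:ℝ) ^ (-(n:ℤ) - 3) ≤ 2 ^ (-(N:ℤ) - 3) := two_zpow_mono (by omega)
          have key : (2:ℝ) ^ (-(n:ℤ) - 3) * rho t ≤ 2 ^ (-(N:ℤ) - 3) * rho t :=
            mul_le_mul_of_nonneg_right hle hρ.le
          constructor
          · nlinarith
          · linarith
        · have h := L0 s' (n :: t) hs'
          rw [beta_cons, rho_cons] at h
          have hle : (2:ℝ) ^ (-(n:ℤ) - 4) ≤ 2 ^ (-(N:ℤ) - 5) := two_zpow_mono (by omega)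
          have key : (2:ℝ) ^ (-(n:ℤ) - 4) * rho t ≤ 2 ^ (-(N:ℤ) - 5) * rho t :=
            mul_le_mul_of_nonneg_right hle hρ.le
          have hpos : (0:ℝ) < 2 ^ (-(n:ℤ) - 4) := zpow_pos two_pos _
          have hpos5 : (0:ℝ) < 2 ^ (-(N:ℤ) - 5) := zpow_pos two_pos _
          have e1 : (2:ℝ) ^ (-(N:ℤ) - 3) = 4 * 2 ^ (-(N:ℤ) - 5) := by
            rw [show -(N:ℤ) - 3 = 2 + (-(N:ℤ) - 5) by ring, zpow_add₀ (two_ne_zero : (2:ℝ) ≠ 0)]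
            norm_num
          constructor
          · nlinarith [h.1, mul_pos hpos hρ]
          · nlinarith [h.2, mul_pos hpos5 hρ]

lemma sum_halves : ∀ N : ℕ, ∑ n ∈ Finset.Icc 1 N, ((1:ℝ)/2)^n = 1 - (1/2)^N := by
  intro N
  induction N with
  | zero => simp
  | succ N ih =>
      rw [Finset.sum_Icc_succ_top (by omega : 1 ≤ N + 1), ih]
      ring

lemma sum_geom (N : ℕ) : ∑ n ∈ Finset.Icc 1 N, (2:ℝ) ^ (-(n:ℤ) - 4) ≤ 1/16 := by
  have he : ∀ n : ℕ, (2:ℝ) ^ (-(n:ℤ) - 4) = (1/16) * ((1:ℝ)/2)^n := by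
    intro n
    rw [show -(n:ℤ) - 4 = -((n:ℤ) + 4) by ring, zpow_neg,
      zpow_add₀ (two_ne_zero : (2:ℝ) ≠ 0), zpow_natCast]
    rw [mul_inv, div_pow]
    norm_num
    ring
  calc ∑ n ∈ Finset.Icc 1 N, (2:ℝ) ^ (-(n:ℤ) - 4)
      = (1/16) * ∑ n ∈ Finset.Icc 1 N, ((1:ℝ)/2)^n := by
        rw [Finset.mul_sum]; exact Finset.sum_congr rfl fun n _ => he n
    _ ≤ 1/16 := by
        rw [sum_halves]
        nlinarith [pow_nonneg (by norm_num : (0:ℝ) ≤ 1/2) N]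

lemma vol_G : ∀ (k N : ℕ) (β ρ : ℝ), 0 ≤ ρ →
    volume (G k N β ρ) ≤ ENNReal.ofReal (ρ * ((16:ℝ) ^ (-(k:ℤ) - 1) + 2 ^ (-(N:ℤ) - 2))) := by
  intro k
  induction k with
  | zero =>
      intro N β ρ hρ
      simp only [G]
      rw [Real.volume_Icc]
      apply ENNReal.ofReal_le_ofReal
      have h0 : (0:ℝ) < 2 ^ (-(N:ℤ) - 2) := zpow_pos two_pos _
      have h16 : ((16:ℝ)) ^ (-((0:ℕ):ℤ) - 1) = 1/16 := by norm_num
      rw [h16]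
      nlinarith
  | succ k ih =>
      intro N β ρ hρ
      simp only [G]
      have hC : (0:ℝ) ≤ (16:ℝ) ^ (-(k:ℤ) - 1) + 2 ^ (-(N:ℤ) - 2) := by positivity
      have step1 : volume (⋃ n ∈ Finset.Icc 1 N,
          ({β + 2 ^ (-(n:ℤ) - 3) * ρ} ∪ G k N (β + 2 ^ (-(n:ℤ) - 4) * ρ) (2 ^ (-(n:ℤ) - 4) * ρ)))
          ≤ ENNReal.ofReal (∑ n ∈ Finset.Icc 1 N,
              (2 ^ (-(n:ℤ) - 4) * ρ * ((16:ℝ) ^ (-(k:ℤ) - 1) + 2 ^ (-(N:ℤ) - 2)))) := by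
        refine le_trans (measure_biUnion_finset_le _ _) ?_
        rw [ENNReal.ofReal_sum_of_nonneg
          (fun n _ => mul_nonneg (mul_nonneg (by positivity) hρ) hC)]
        refine Finset.sum_le_sum fun n _ => ?_
        refine le_trans (measure_union_le _ _) ?_
        rw [Real.volume_singleton, zero_add]
        exact ih N _ _ (mul_nonneg (by positivity) hρ)
      refine le_trans (measure_union_le _ _) ?_
      rw [Real.volume_Icc]
      refine le_trans (add_le_add (le_refl _) step1) ?_
      rw [show β + 2 ^ (-(N:ℤ) - 3) * ρ - β = 2 ^ (-(N:ℤ) - 3) * ρ by ring]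
      rw [← ENNReal.ofReal_add (mul_nonneg (by positivity) hρ)
        (Finset.sum_nonneg fun n _ => mul_nonneg (mul_nonneg (by positivity) hρ) hC)]
      apply ENNReal.ofReal_le_ofReal
      have hsum : ∑ n ∈ Finset.Icc 1 N,
          (2 ^ (-(n:ℤ) - 4) * ρ * ((16:ℝ) ^ (-(k:ℤ) - 1) + 2 ^ (-(N:ℤ) - 2)))
          = (∑ n ∈ Finset.Icc 1 N, (2:ℝ) ^ (-(n:ℤ) - 4)) *
              (ρ * ((16:ℝ) ^ (-(k:ℤ) - 1) + 2 ^ (-(N:ℤ) - 2))) := by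
        rw [Finset.sum_mul]; exact Finset.sum_congr rfl fun n _ => by ring
      rw [hsum]
      have hS := sum_geom N
      have hSnn : (0:ℝ) ≤ ∑ n ∈ Finset.Icc 1 N, (2:ℝ) ^ (-(n:ℤ) - 4) :=
        Finset.sum_nonneg fun n _ => by positivity
      have hρC : (0:ℝ) ≤ ρ * ((16:ℝ) ^ (-(k:ℤ) - 1) + 2 ^ (-(N:ℤ) - 2)) := by positivity
      have e2 : (2:ℝ) ^ (-(N:ℤ) - 3) = 2 * 2 ^ (-(N:ℤ) - 4) := by
        rw [show -(N:ℤ) - 3 = 1 + (-(N:ℤ) - 4) by ring, zpow_add₀ (two_ne_zero : (2:ℝ) ≠ 0)]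
        norm_num
      have e3 : (2:ℝ) ^ (-(N:ℤ) - 2) = 4 * 2 ^ (-(N:ℤ) - 4) := by
        rw [show -(N:ℤ) - 2 = 2 + (-(N:ℤ) - 4) by ring, zpow_add₀ (two_ne_zero : (2:ℝ) ≠ 0)]
        norm_num
      have e16 : (16:ℝ) ^ (-(k:ℤ) - 1) = 16 * 16 ^ (-(k:ℤ) - 2) := by
        rw [show -(k:ℤ) - 1 = 1 + (-(k:ℤ) - 2) by ring, zpow_add₀ (by norm_num : (16:ℝ) ≠ 0)]
        norm_num
      have ecast : (-((k:ℕ)+1:ℕ):ℤ) - 1 = -(k:ℤ) - 2 := by push_cast; ring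
      rw [ecast]
      have hp : (0:ℝ) < 2 ^ (-(N:ℤ) - 4) := zpow_pos two_pos _
      have hq : (0:ℝ) < (16:ℝ) ^ (-(k:ℤ) - 2) := zpow_pos (by norm_num) _
      have hmul : (∑ n ∈ Finset.Icc 1 N, (2:ℝ) ^ (-(n:ℤ) - 4)) *
            (ρ * ((16:ℝ) ^ (-(k:ℤ) - 1) + 2 ^ (-(N:ℤ) - 2)))
          ≤ (1/16) * (ρ * ((16:ℝ) ^ (-(k:ℤ) - 1) + 2 ^ (-(N:ℤ) - 2))) :=
        mul_le_mul_of_nonneg_right hS hρC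
      nlinarith [mul_nonneg hρ hp.le, mul_nonneg hρ hq.le]

lemma hb (k : ℕ) : 8 * ((16:ℝ) ^ (-(k:ℤ) - 1) + 2 ^ (-(k:ℤ) - 2)) ≤ 4 * (1/2:ℝ) ^ k := by
  have h1 : (16:ℝ) ^ (-(k:ℤ) - 1) ≤ 2 ^ (-(k:ℤ) - 2) := by
    rw [show (16:ℝ) = 2 ^ (4:ℤ) by norm_num, ← zpow_mul]
    exact two_zpow_mono (by omega)
  have h2 : (2:ℝ) ^ (-(k:ℤ) - 2) = (1/4) * (1/2:ℝ) ^ k := by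
    rw [show -(k:ℤ) - 2 = -((k:ℤ) + 2) by ring, zpow_neg,
      zpow_add₀ (two_ne_zero : (2:ℝ) ≠ 0), zpow_natCast]
    rw [mul_inv, div_pow]
    norm_num
    ring
  linarith


/-- The set `A = {a_{n₁,…,n_k} : k ≥ 1, n₁,…,n_k ∈ ℕ⁺}`. -/
def ASet : Set ℝ := {x : ℝ | ∃ l : List ℕ+, l ≠ [] ∧ aSeq l = x}

/-- The closure of `A` has Lebesgue measure zero; indeed no point of the closure of `A`
is a Lebesgue density point of the closure of `A`. -/
theorem closure_ASet_null_and_no_density_point :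
    volume (closure ASet) = 0 ∧
      ∀ x ∈ closure ASet,
        ¬ Tendsto
            (fun r : ℝ =>
              (volume (closure ASet ∩ Set.Icc (x - r) (x + r))).toReal / (2 * r))
            (𝓝[>] (0 : ℝ)) (𝓝 1) := by
  have hA : ∀ k : ℕ, ASet ⊆ G k k 0 8 := by
    rintro k x ⟨l, hl, rfl⟩
    have h := LG k k l [] hl
    simpa [beta, rho] using h
  have hvol : ∀ k : ℕ, volume (closure ASet) ≤ ENNReal.ofReal (4 * (1/2:ℝ) ^ k) := by
    intro k
    have hsub : closure ASet ⊆ G k k 0 8 := closure_minimal (hA k) (isClosed_G k k 0 8)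
    refine le_trans (measure_mono hsub) (le_trans (vol_G k k 0 8 (by norm_num)) ?_)
    exact ENNReal.ofReal_le_ofReal (by simpa using hb k)
  have htend : Tendsto (fun k : ℕ => ENNReal.ofReal (4 * (1/2:ℝ) ^ k)) atTop (𝓝 0) := by
    have h := tendsto_pow_atTop_nhds_zero_of_lt_one (by norm_num : (0:ℝ) ≤ 1/2)
      (by norm_num : (1/2:ℝ) < 1)
    have h2 := h.const_mul (4:ℝ)
    rw [mul_zero] at h2
    have := ENNReal.tendsto_ofReal h2
    simpa using this
  have hnull : volume (closure ASet) = 0 :=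
    le_antisymm (ge_of_tendsto htend (Filter.Eventually.of_forall hvol)) zero_le
  refine ⟨hnull, ?_⟩
  intro x hx hT
  have hz : ∀ r : ℝ, volume (closure ASet ∩ Set.Icc (x - r) (x + r)) = 0 :=
    fun r => measure_mono_null Set.inter_subset_left hnull
  simp only [hz, ENNReal.toReal_zero, zero_div] at hT
  have := tendsto_nhds_unique hT tendsto_const_nhds
  norm_num at this
end
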